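/- If done(A∘B,σ,R) + c_A ≥ (1/k)·(opt_T(σ)/opt_U(σ))·done(B,σ,R_A) holds whenever ratios are defined, done(B,σ,R_A) ≥ (1/l)·opt_U(σ) − c_B, and opt_T(σ) ≤ c_T·opt_U(σ), with all quantities nonnegative reals, then done(A∘B,σ,R) + c_A + c_B·c_T/k ≥ (1/(k·l))·opt_T(σ). -/

import Mathlib

/-- Abstract composition theorem (Theorem 4.2). -/
theorem composition_inequality
    (d b oT oU cA cB cT k l : ℝ)
    (hd : 0 ≤ d) (hb : 0 ≤ b) (hoT : 0 ≤ oT) (hoU : 0 ≤ oU)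
    (hcA : 0 ≤ cA) (hcB : 0 ≤ cB) (hcT : 0 ≤ cT)
    (hk : 0 < k) (hl : 0 < l)
    (hrel : (d + cA) * oU ≥ (1 / k) * oT * b)
    (hcomp : b ≥ (1 / l) * oU - cB)
    (hfeas : oT ≤ cT * oU) :
    d + cA + cB * cT / k ≥ oT / (k * l) := by
  rcases eq_or_lt_of_le hoU with h0 | h0
  · have hT0 : oT = 0 := le_antisymm (by nlinarith) hoT
    rw [hT0, zero_div]
    positivity
  · have h1 : oT * b ≤ k * ((d + cA) * oU) := by
      have h := mul_le_mul_of_nonneg_left hrel hk.le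
      rwa [show k * (1 / k * oT * b) = oT * b by field_simp] at h
    have h1' : oT * b * l ≤ (d + cA) * oU * (k * l) := by nlinarith
    have h2 : oT * b * l ≥ oT * oU - l * (cB * oT) := by
      have h := mul_le_mul_of_nonneg_left hcomp hoT
      have h3 := mul_le_mul_of_nonneg_right h hl.le
      rw [show oT * (1 / l * oU - cB) * l = oT * oU - l * (cB * oT) by field_simp] at h3
      linarith
    have h4 : cB * oT ≤ cB * cT * oU := by nlinarith
    have h5 : oU * ((d + cA) * (k * l) + l * (cB * cT) - oT) ≥ 0 := by nlinarith
    have h6 : (d + cA) * (k * l) + l * (cB * cT) - oT ≥ 0 := by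
      rcases (mul_nonneg_iff_of_pos_left h0).mp h5 with h; exact h
    have hkl : 0 < k * l := mul_pos hk hl
    rw [ge_iff_le, div_le_iff₀ hkl]
    have : cB * cT / k * (k * l) = l * (cB * cT) := by field_simp
    have h1 := h1'
    nlinarith [h6]
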